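/- For every t ∈ ℝ and z ∈ ℂ with Ω(z)·|t| < 1, the Kapteyn series ∑_{n=1}^∞ t^n · J_n(n·z) is summable. -/

import Mathlib

/-!
`J_n(w)` is the `n`-th Laurent coefficient of `exp ((w / 2) (ζ - ζ⁻¹))`, so computing it as a
Fourier coefficient on the circle `|ζ| = r` gives the Cauchy-type estimate
`|J_n(w)| ≤ exp (|w r - w̄ / r| / 2) / rⁿ` for every `r > 0`. For `w = n z`, `s = √(1 - z²)` and
the saddle-point radius `r = |1 + s| / |z|`, the exponent is exactly `n Re s`, so
`|J_n(n z)| ≤ Ω(z)ⁿ` and the Kapteyn series is dominated by the geometric series `∑ (Ω(z) |t|)ⁿ`.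
-/

/-- The Bessel function of the first kind of (integer) order `n`,
defined by its everywhere-convergent power series. -/
noncomputable def besselJ (n : ℕ) (z : ℂ) : ℂ :=
  ∑' j : ℕ, ((-1 : ℂ) ^ j / ((Nat.factorial j : ℂ) * (Nat.factorial (n + j) : ℂ))) *
    (z / 2) ^ (n + 2 * j)

/-- `Ω(z) = |z exp(√(1−z²)) / (1 + √(1−z²))|`, with the principal square root. -/
noncomputable def Omega (z : ℂ) : ℝ :=
  ‖z * Complex.exp ((1 - z ^ 2) ^ (1 / 2 : ℂ)) / (1 + (1 - z ^ 2) ^ (1 / 2 : ℂ))‖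

open Complex ComplexConjugate Nat
open scoped Real

theorem integral_exp_int_mul_mul_I (m : ℤ) :
    ∫ θ in (0 : ℝ)..2 * π, exp (m * (θ * I)) = if m = 0 then (2 * π : ℂ) else 0 := by
  split_ifs with hm
  · simp [hm]
  · have hmI : I * m ≠ 0 := mul_ne_zero I_ne_zero (Int.cast_ne_zero.mpr hm)
    simp_rw [← mul_assoc, mul_comm _ I, ← mul_assoc]
    rw [integral_exp_mul_complex hmI]
    have harg : I * m * (2 * π : ℝ) = m * (2 * π * I) := by push_cast; ring
    rw [harg, exp_int_mul_two_pi_mul_I]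
    simp

theorem integral_tsum_mul_exp_int_mul_mul_I {ι : Type*} [Countable ι] {a : ι → ℂ}
    (ha : Summable (‖a ·‖)) (k : ι → ℤ) :
    ∫ θ in (0 : ℝ)..2 * π, ∑' i, a i * exp (k i * (θ * I)) =
      2 * π * ∑' i, if k i = 0 then a i else 0 := by
  have hterm : ∀ i (θ : ℝ), ‖a i * exp (k i * (θ * I))‖ = ‖a i‖ := fun i θ => by
    simp [norm_exp]
  have hsum := intervalIntegral.hasSum_integral_of_dominated_convergence
    (F := fun i (θ : ℝ) => a i * exp (k i * (θ * I))) (a := 0) (b := 2 * π)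
    (μ := MeasureTheory.volume) (f := fun θ => ∑' i, a i * exp (k i * (θ * I)))
    (fun i _ => ‖a i‖) (fun i => by fun_prop) (fun i => .of_forall fun θ _ => (hterm i θ).le)
    (.of_forall fun _ _ => ha) intervalIntegrable_const
    (.of_forall fun θ _ => (ha.of_norm_bounded fun i => (hterm i θ).le).hasSum)
  rw [← hsum.tsum_eq, ← tsum_mul_left]
  refine tsum_congr fun i => ?_
  rw [intervalIntegral.integral_const_mul, integral_exp_int_mul_mul_I]
  by_cases hk : k i = 0 <;> simp [hk, mul_comm]

theorem summable_norm_pow_div_factorial (u : ℂ) : Summable fun p : ℕ => ‖u ^ p / (p ! : ℂ)‖ := by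
  simpa [norm_pow] using Real.summable_pow_div_factorial ‖u‖

theorem exp_mul_exp_int_mul_eq_tsum (u : ℂ) (m : ℤ) (θ : ℝ) :
    exp (u * exp (m * (θ * I))) = ∑' p : ℕ, u ^ p / p ! * exp ((p * m : ℤ) * (θ * I)) := by
  have hseries := (NormedSpace.expSeries_div_hasSum_exp (u * exp (m * (θ * I)))).tsum_eq
  rw [← exp_eq_exp_ℂ] at hseries
  rw [← hseries]
  refine tsum_congr fun p => ?_
  rw [mul_pow, ← exp_nat_mul]
  push_cast
  ring_nf

theorem exp_mul_exp_mul_exp_eq_tsum (u v : ℂ) (n : ℕ) (θ : ℝ) :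
    exp (u * exp (θ * I)) * exp (v * exp (-(θ * I))) * exp (-(n * (θ * I))) =
      ∑' pq : ℕ × ℕ, u ^ pq.1 / (pq.1)! * (v ^ pq.2 / (pq.2)!) *
        exp (((pq.1 - pq.2 - n : ℤ) : ℂ) * (θ * I)) := by
  have hnorm : ∀ (w : ℂ) (m : ℤ) (p : ℕ),
      ‖w ^ p / p ! * exp ((p * m : ℤ) * (θ * I))‖ = ‖w ^ p / (p ! : ℂ)‖ := fun w m p => by
    simp [norm_exp]
  have hu := exp_mul_exp_int_mul_eq_tsum u 1 θ
  have hv := exp_mul_exp_int_mul_eq_tsum v (-1) θ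
  simp only [Int.cast_one, one_mul, Int.cast_neg, neg_one_mul] at hu hv
  rw [hu, hv, tsum_mul_tsum_of_summable_norm
    ((summable_norm_pow_div_factorial u).congr fun p => (hnorm u 1 p).symm)
    ((summable_norm_pow_div_factorial v).congr fun p => (hnorm v (-1) p).symm), ← tsum_mul_right]
  refine tsum_congr fun pq => ?_
  simp only [mul_one, mul_neg_one]
  rw [mul_mul_mul_comm, mul_assoc, ← exp_add, ← exp_add]
  push_cast
  ring_nf

theorem integral_exp_mul_exp_mul_exp (u v : ℂ) (n : ℕ) :
    ∫ θ in (0 : ℝ)..2 * π,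
        exp (u * exp (θ * I)) * exp (v * exp (-(θ * I))) * exp (-(n * (θ * I))) =
      2 * π * ∑' q : ℕ, u ^ (q + n) / (q + n)! * (v ^ q / q !) := by
  simp_rw [exp_mul_exp_mul_exp_eq_tsum]
  rw [integral_tsum_mul_exp_int_mul_mul_I
    ((summable_norm_pow_div_factorial u).mul_norm (summable_norm_pow_div_factorial v))]
  have hdiag : (Function.support fun pq : ℕ × ℕ =>
      if (pq.1 - pq.2 - n : ℤ) = 0 then u ^ pq.1 / (pq.1)! * (v ^ pq.2 / (pq.2)!) else 0) ⊆
      Set.range fun q : ℕ => (q + n, q) := by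
    intro pq hpq
    refine ⟨pq.2, Prod.ext ?_ rfl⟩
    by_contra hne
    exact hpq (if_neg (by dsimp only at hne; omega))
  have hinj : Function.Injective fun q : ℕ => (q + n, q) := fun a b h => (Prod.ext_iff.1 h).2
  rw [← hinj.tsum_eq hdiag]
  simp

theorem norm_exp_mul_exp_mul_exp_le (u v : ℂ) (n : ℕ) (θ : ℝ) :
    ‖exp (u * exp (θ * I)) * exp (v * exp (-(θ * I))) * exp (-(n * (θ * I)))‖ ≤
      Real.exp ‖u + conj v‖ := by
  have hconj : exp (-(θ * I)) = conj (exp (θ * I)) := by rw [← exp_conj]; simp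
  have hre : (v * conj (exp (θ * I))).re = (conj v * exp (θ * I)).re := by
    rw [← conj_re, map_mul, conj_conj]
  rw [norm_mul, norm_mul, norm_exp, norm_exp, norm_exp, ← Real.exp_add, ← Real.exp_add,
    Real.exp_le_exp, hconj, hre, ← add_re, ← add_mul]
  calc ((u + conj v) * exp (θ * I)).re + (-(n * (θ * I))).re
      = ((u + conj v) * exp (θ * I)).re := by simp
    _ ≤ ‖(u + conj v) * exp (θ * I)‖ := re_le_norm _
    _ = ‖u + conj v‖ := by rw [norm_mul, norm_exp_ofReal_mul_I, mul_one]

theorem norm_tsum_pow_mul_pow_le (u v : ℂ) (n : ℕ) :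
    ‖∑' q : ℕ, u ^ (q + n) / (q + n)! * (v ^ q / q !)‖ ≤ Real.exp ‖u + conj v‖ := by
  have h := intervalIntegral.norm_integral_le_of_norm_le_const (a := 0) (b := 2 * π)
    fun θ _ => norm_exp_mul_exp_mul_exp_le u v n θ
  rw [integral_exp_mul_exp_mul_exp, norm_mul, sub_zero, abs_of_pos Real.two_pi_pos] at h
  have h2π : ‖(2 * π : ℂ)‖ = 2 * π := by
    rw [show (2 * π : ℂ) = ((2 * π : ℝ) : ℂ) by push_cast; ring, norm_real,
      Real.norm_of_nonneg Real.two_pi_pos.le]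
  rw [h2π, mul_comm] at h
  exact le_of_mul_le_mul_right h Real.two_pi_pos

theorem pow_mul_besselJ_eq_tsum (n : ℕ) (w : ℂ) {r : ℂ} (hr : r ≠ 0) :
    r ^ n * besselJ n w =
      ∑' q : ℕ, (w * r / 2) ^ (q + n) / (q + n)! * ((-(w / (2 * r))) ^ q / q !) := by
  rw [besselJ, ← tsum_mul_left]
  refine tsum_congr fun q => ?_
  rw [add_comm q n, show w * r / 2 = r * (w / 2) by ring, show w / (2 * r) = w / 2 / r by ring]
  generalize w / 2 = x
  rw [neg_pow (x / r), div_pow]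
  field_simp
  ring

theorem norm_besselJ_le (n : ℕ) (w : ℂ) {r : ℝ} (hr : 0 < r) :
    ‖besselJ n w‖ ≤ Real.exp ‖w * r / 2 - conj w / (2 * r)‖ / r ^ n := by
  have hr' : (r : ℂ) ≠ 0 := ofReal_ne_zero.2 hr.ne'
  have h := norm_tsum_pow_mul_pow_le (w * r / 2) (-(w / (2 * r))) n
  rw [← pow_mul_besselJ_eq_tsum n w hr', norm_mul, norm_pow, norm_real,
    Real.norm_of_nonneg hr.le, map_neg, map_div₀, map_mul, conj_ofReal, map_ofNat,
    ← sub_eq_add_neg] at h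
  rwa [le_div_iff₀ (pow_pos hr n), mul_comm]

theorem besselJ_zero_right (n : ℕ) : besselJ n 0 = 0 ^ n := by
  rw [besselJ, tsum_eq_single 0 fun j hj => by simp [hj]]
  cases n <;> simp

theorem norm_mul_sub_conj_div_eq {z s : ℂ} (hz : z ≠ 0) (hs : s ^ 2 = 1 - z ^ 2)
    (h1s : 1 + s ≠ 0) :
    ‖z * (‖1 + s‖ / ‖z‖ : ℝ) - conj z / (‖1 + s‖ / ‖z‖ : ℝ)‖ = 2 * |s.re| := by
  have ha : 0 < ‖z‖ := norm_pos_iff.2 hz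
  have hb : 0 < ‖1 + s‖ := norm_pos_iff.2 h1s
  have hzz : (‖z‖ : ℂ) ^ 2 = z * conj z := (mul_conj' z).symm
  have hss : (‖1 + s‖ : ℂ) ^ 2 = (1 + s) * (1 + conj s) := by
    rw [← mul_conj', map_add, map_one]
  have hs' : conj s ^ 2 = 1 - conj z ^ 2 := by
    simpa using congrArg conj hs
  have key : (z * (‖1 + s‖ / ‖z‖ : ℝ) - conj z / (‖1 + s‖ / ‖z‖ : ℝ)) * (‖z‖ * ‖1 + s‖ : ℝ) =
      z * (1 + conj s) * (s + conj s) := by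
    have ha' : (‖z‖ : ℂ) ≠ 0 := ofReal_ne_zero.2 ha.ne'
    have hb' : (‖1 + s‖ : ℂ) ≠ 0 := ofReal_ne_zero.2 hb.ne'
    push_cast
    field_simp
    linear_combination z * hss - conj z * hzz - z * hs'
  have hnorm := congrArg norm key
  rw [norm_mul, norm_mul, norm_mul, norm_real, Real.norm_of_nonneg (by positivity), add_conj,
    norm_real, Real.norm_eq_abs, abs_mul, abs_two, show 1 + conj s = conj (1 + s) by simp,
    norm_conj] at hnorm
  nlinarith [mul_pos ha hb]

theorem norm_besselJ_natCast_mul_le (n : ℕ) (z : ℂ) : ‖besselJ n (n * z)‖ ≤ Omega z ^ n := by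
  rcases eq_or_ne z 0 with rfl | hz
  · simp [besselJ_zero_right, Omega]
  set s := (1 - z ^ 2) ^ (1 / 2 : ℂ) with hs_def
  have hs : s ^ 2 = 1 - z ^ 2 := by rw [hs_def, one_div]; exact cpow_ofNat_inv_pow _ 2
  have hre : 0 ≤ s.re := by rw [hs_def, one_div, cpow_inv_two_re]; positivity
  have h1s : 1 + s ≠ 0 := fun h => by
    have := congrArg re h
    simp only [add_re, one_re, zero_re] at this
    linarith
  set ρ := ‖1 + s‖ / ‖z‖ with hρ_def
  have hρ : 0 < ρ := div_pos (norm_pos_iff.2 h1s) (norm_pos_iff.2 hz)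
  have hOmega : Omega z = Real.exp s.re / ρ := by
    rw [Omega, ← hs_def, norm_div, norm_mul, norm_exp, hρ_def, div_div_eq_mul_div, mul_comm]
  have harg : ‖n * z * ρ / 2 - conj (n * z) / (2 * ρ)‖ = n * s.re := by
    rw [map_mul, map_natCast, show (n * z * ρ / 2 - n * conj z / (2 * ρ) : ℂ) =
      (n / 2 : ℂ) * (z * ρ - conj z / ρ) by ring, norm_mul, norm_mul_sub_conj_div_eq hz hs h1s,
      abs_of_nonneg hre, norm_div, norm_natCast, Complex.norm_two]
    ring
  calc ‖besselJ n (n * z)‖ ≤ Real.exp ‖n * z * ρ / 2 - conj (n * z) / (2 * ρ)‖ / ρ ^ n :=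
        norm_besselJ_le n _ hρ
    _ = Omega z ^ n := by rw [harg, Real.exp_nat_mul, hOmega, ← div_pow]

theorem kapteyn_summable (t : ℝ) (z : ℂ) (h : Omega z * |t| < 1) :
    Summable (fun n : ℕ => (t : ℂ) ^ (n + 1) * besselJ (n + 1) ((n + 1 : ℕ) * z)) := by
  have hq : 0 ≤ Omega z * |t| := mul_nonneg (norm_nonneg _) (abs_nonneg t)
  refine Summable.of_norm_bounded ((summable_nat_add_iff 1).2 (summable_geometric_of_lt_one hq h))
    fun n => ?_
  calc ‖(t : ℂ) ^ (n + 1) * besselJ (n + 1) ((n + 1 : ℕ) * z)‖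
      = |t| ^ (n + 1) * ‖besselJ (n + 1) ((n + 1 : ℕ) * z)‖ := by simp
    _ ≤ |t| ^ (n + 1) * Omega z ^ (n + 1) := by gcongr; exact norm_besselJ_natCast_mul_le _ z
    _ = (Omega z * |t|) ^ (n + 1) := by ring
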